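/- For every natural number n ≥ 1, R_{n,n} = R_n, i.e. (2/n) Σ_{j=0}^{n−1} [1/C(n−1,j)] · [2^{−n} Σ_{i=j+1}^{n} C(n,i)] = (1/n) Σ_{j=0}^{n−1} 1/C(n−1,j). -/

import Mathlib

/-!
Pair the term `j` of `cubeRes n n` with the term `n - 1 - j`. The weights `1 / C(n-1, j)` agree,
and by `C(n, i) = C(n, n - i)` the two binomial tails `2⁻ⁿ ∑_{i > j} C(n, i)` and
`2⁻ⁿ ∑_{i ≥ n - j} C(n, i)` add up to `1`, so twice the sum is `∑_j 1 / C(n-1, j)`.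
-/

/-- Resistance between vertices at Hamming distance `k` in the `n`-cube of unit resistors. -/
noncomputable def cubeRes (n k : ℕ) : ℝ :=
  (2 / n) * ∑ j ∈ Finset.range k,
    (1 / ((n - 1).choose j : ℝ)) * ((1 / 2 ^ n) * ∑ i ∈ Finset.Icc (j + 1) n, (n.choose i : ℝ))

open Finset

theorem Finset.two_mul_sum_range_mul_of_reflect {R : Type*} [CommSemiring R] {n : ℕ}
    (f g : ℕ → R) (hf : ∀ j < n, f (n - 1 - j) = f j)
    (hg : ∀ j < n, g j + g (n - 1 - j) = 1) :
    2 * ∑ j ∈ range n, f j * g j = ∑ j ∈ range n, f j := by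
  have hreflect : ∑ j ∈ range n, f j * g j = ∑ j ∈ range n, f j * g (n - 1 - j) := by
    rw [← sum_range_reflect]
    refine sum_congr rfl fun j hj => ?_
    rw [hf j (mem_range.mp hj)]
  calc 2 * ∑ j ∈ range n, f j * g j
      = ∑ j ∈ range n, f j * (g j + g (n - 1 - j)) := by
        rw [two_mul]
        nth_rw 2 [hreflect]
        simp only [mul_add, sum_add_distrib]
    _ = ∑ j ∈ range n, f j := sum_congr rfl fun j hj => by rw [hg j (mem_range.mp hj), mul_one]

theorem Nat.sum_Icc_sub_choose {n j : ℕ} (hj : j ≤ n) :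
    ∑ i ∈ Icc (n - j) n, n.choose i = ∑ i ∈ range (j + 1), n.choose i := by
  have := sum_Ico_reflect n.choose 0 (m := j + 1) (n := n) (by omega)
  rw [← range_eq_Ico, show n + 1 - (j + 1) = n - j by omega, Nat.sub_zero,
    Ico_add_one_right_eq_Icc] at this
  rw [← this]
  exact sum_congr rfl fun i hi => Nat.choose_symm (by simp at hi; omega)

theorem Nat.sum_range_choose_add_sum_Icc_choose {n j : ℕ} (hj : j ≤ n) :
    ∑ i ∈ range (j + 1), n.choose i + ∑ i ∈ Icc (j + 1) n, n.choose i = 2 ^ n := by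
  rw [← Ico_add_one_right_eq_Icc, sum_range_add_sum_Ico _ (by omega), Nat.sum_range_choose]

theorem binomial_tail_add_tail_reflect {n j : ℕ} (hj : j < n) :
    (1 / 2 ^ n : ℝ) * ∑ i ∈ Icc (j + 1) n, (n.choose i : ℝ)
      + (1 / 2 ^ n : ℝ) * ∑ i ∈ Icc (n - 1 - j + 1) n, (n.choose i : ℝ) = 1 := by
  have htotal :
      ∑ i ∈ Icc (j + 1) n, n.choose i + ∑ i ∈ Icc (n - j) n, n.choose i = 2 ^ n := by
    rw [Nat.sum_Icc_sub_choose hj.le, add_comm,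
      Nat.sum_range_choose_add_sum_Icc_choose hj.le]
  have htotal_real : ∑ i ∈ Icc (j + 1) n, (n.choose i : ℝ)
      + ∑ i ∈ Icc (n - j) n, (n.choose i : ℝ) = 2 ^ n := by
    exact_mod_cast htotal
  rw [show n - 1 - j + 1 = n - j by omega, ← mul_add, htotal_real,
    one_div_mul_cancel (by positivity)]

theorem stmt_16 (n : ℕ) :
    cubeRes n n = (1 / n : ℝ) * ∑ j ∈ Finset.range n, (1 : ℝ) / (n - 1).choose j := by
  have hweight : ∀ j < n, (1 : ℝ) / (n - 1).choose (n - 1 - j) = 1 / (n - 1).choose j :=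
    fun j hj => by rw [Nat.choose_symm (by omega)]
  let tail (j : ℕ) : ℝ := (1 / 2 ^ n) * ∑ i ∈ Icc (j + 1) n, (n.choose i : ℝ)
  rw [cubeRes, div_eq_mul_one_div 2, mul_comm 2, mul_assoc,
    two_mul_sum_range_mul_of_reflect _ tail hweight fun j hj => binomial_tail_add_tail_reflect hj]
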